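/- arXiv:2604.14219 — 4 statements merged into one kernel-verified Lean document; each statement's English description precedes it below -/
import Mathlib

section
/- Define sequences P_n, Q_n (over ℚ, for n ≥ 0) by P_0 = 1, P_1 = 20, Q_0 = 1, Q_1 = 21, and for n ≥ 2: U_n = (2n+1)(3n²+3n+1)·U_{n−1} − n⁶·U_{n−2}, where U stands for either P or Q. Let s_n := ∑_{k=0}^n (n choose k)² (2k choose n)² and let B_n be the rational sequence with B_0 = 0, B_1 = 1 and (n+1)³B_{n+1} = (2n+1)(12n²+12n+4)B_n − 16n³B_{n−1} for n ≥ 1. Then for every n ≥ 0: P_n = ((n+1)!)³ · s_{n+1} / 4^{n+1} and Q_n = ((n+1)!)³ · B_{n+1} / 4^n. -/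
/-!
Creative telescoping (Zeilberger's algorithm) shows that `s` satisfies the same three-term
recurrence as `B`. The substitution `U n = ((n+1)!)³ u (n+1) / 4 ^ n` turns every solution `u`
of that recurrence into a solution of the continuant recurrence, and a solution of a three-term
recurrence is determined by its first two terms.
-/

/-- The level-8 Apéry-like sequence s_n = ∑_{k=0}^n (n choose k)² (2k choose n)². -/
def s (n : ℕ) : ℕ := ∑ k ∈ Finset.range (n + 1), (n.choose k) ^ 2 * ((2 * k).choose n) ^ 2

open Finset

theorem Nat.cast_choose_succ_mul_sub {R : Type*} [CommRing R] (n k : ℕ) :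
    ((n + 1).choose k : R) * (n + 1 - k) = n.choose k * (n + 1) := by
  rcases le_or_gt k (n + 1) with h | h
  · have := congrArg (Nat.cast (R := R)) (Nat.choose_mul_succ_eq n k)
    push_cast [Nat.cast_sub h] at this
    exact this.symm
  · simp [Nat.choose_eq_zero_of_lt h, Nat.choose_eq_zero_of_lt (Nat.lt_of_succ_lt h)]

theorem Nat.cast_choose_succ_right_mul {R : Type*} [CommRing R] (n k : ℕ) :
    (n.choose (k + 1) : R) * (k + 1) = n.choose k * (n - k) := by
  rcases le_or_gt k n with h | h
  · have := congrArg (Nat.cast (R := R)) (Nat.choose_succ_right_eq n k)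
    push_cast [Nat.cast_sub h] at this
    exact this
  · simp [Nat.choose_eq_zero_of_lt h, Nat.choose_eq_zero_of_lt (Nat.lt_succ_of_lt h)]

theorem Nat.choose_add_two_add_two (n m : ℕ) :
    (n + 2).choose (m + 2) = n.choose (m + 2) + 2 * n.choose (m + 1) + n.choose m := by
  rw [Nat.choose_succ_succ (n + 1), Nat.choose_succ_succ n m, Nat.choose_succ_succ n (m + 1)]
  ring

def sTerm (n k : ℕ) : ℚ := (n.choose k : ℚ) ^ 2 * ((2 * k).choose n : ℚ) ^ 2

theorem cast_s_eq_sum_sTerm {n N : ℕ} (h : n + 1 ≤ N) :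
    (s n : ℚ) = ∑ k ∈ range N, sTerm n k := by
  rw [s]
  push_cast
  refine sum_subset (range_subset_range.2 h) fun k _ hk => ?_
  simp [Nat.choose_eq_zero_of_lt (show n < k by simpa using hk)]

/-- Zeilberger's certificate for the recurrence of `s`. -/
def sCert (m k : ℕ) : ℚ := (4 * (2 * m + 3) * (m + 2 - k) ^ 2 - (m + 2) ^ 3) * sTerm (m + 2) k

theorem sTerm_rec_eq_sCert_sub (m k : ℕ) :
    (m + 2) ^ 3 * sTerm (m + 2) k
      - (2 * m + 3) * (12 * (m + 1) ^ 2 + 12 * (m + 1) + 4) * sTerm (m + 1) k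
      + 16 * (m + 1) ^ 3 * sTerm m k
      = sCert m (k + 1) - sCert m k := by
  have hm1 : (m + 1 : ℚ) ≠ 0 := by positivity
  have hm2 : (m + 2 : ℚ) ≠ 0 := by positivity
  have hk1 : (k + 1 : ℚ) ≠ 0 := by positivity
  have h1 := Nat.cast_choose_succ_mul_sub (R := ℚ) (m + 1) k
  have h2 := Nat.cast_choose_succ_mul_sub (R := ℚ) m k
  have h3 := Nat.cast_choose_succ_right_mul (R := ℚ) (2 * k) m
  have h4 := Nat.cast_choose_succ_right_mul (R := ℚ) (2 * k) (m + 1)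
  have h5 := Nat.cast_choose_succ_right_mul (R := ℚ) (m + 2) k
  push_cast at h1 h2 h3 h4 h5
  -- express every binomial coefficient through `C(m+2, k)` and `C(2k, m)`
  have e1 : ((m + 1).choose k : ℚ) = (m + 2).choose k * (m + 2 - k) / (m + 2) := by
    field_simp; linear_combination -h1
  have e2 : (m.choose k : ℚ)
      = (m + 2).choose k * (m + 2 - k) * (m + 1 - k) / ((m + 2) * (m + 1)) := by
    field_simp; linear_combination (k - m - 1 : ℚ) * h1 - (m + 2 : ℚ) * h2
  have e3 : ((2 * k).choose (m + 1) : ℚ) = (2 * k).choose m * (2 * k - m) / (m + 1) := by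
    field_simp; linear_combination h3
  have e4 : ((2 * k).choose (m + 2) : ℚ)
      = (2 * k).choose m * (2 * k - m) * (2 * k - m - 1) / ((m + 1) * (m + 2)) := by
    field_simp; linear_combination (2 * k - m - 1 : ℚ) * h3 + (m + 1 : ℚ) * h4
  have e5 : ((m + 2).choose (k + 1) : ℚ) = (m + 2).choose k * (m + 2 - k) / (k + 1) := by
    field_simp; linear_combination h5
  have e6 : ((2 * (k + 1)).choose (m + 2) : ℚ)
      = (2 * k).choose (m + 2) + 2 * (2 * k).choose (m + 1) + (2 * k).choose m := by
    exact_mod_cast Nat.choose_add_two_add_two (2 * k) m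
  simp only [sCert, sTerm]
  push_cast
  rw [e6, e5, e4, e3, e2, e1]
  field_simp
  ring

theorem cast_s_rec (m : ℕ) :
    ((m : ℚ) + 2) ^ 3 * s (m + 2)
      = (2 * m + 3) * (12 * (m + 1) ^ 2 + 12 * (m + 1) + 4) * s (m + 1)
        - 16 * (m + 1) ^ 3 * s m := by
  have hcert0 : sCert m 0 = 0 := by simp [sCert, sTerm]
  have hcertTop : sCert m (m + 3) = 0 := by simp [sCert, sTerm]
  have := sum_range_sub (sCert m) (m + 3)
  simp only [← sTerm_rec_eq_sCert_sub, sum_add_distrib, sum_sub_distrib, ← mul_sum, hcert0,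
    hcertTop] at this
  rw [cast_s_eq_sum_sTerm (N := m + 3) le_rfl, cast_s_eq_sum_sTerm (N := m + 3) (by omega),
    cast_s_eq_sum_sTerm (N := m + 3) (by omega)]
  linear_combination this

def SatisfiesLevelEightRec (u : ℕ → ℚ) : Prop :=
  ∀ n : ℕ, 1 ≤ n →
    ((n : ℚ) + 1) ^ 3 * u (n + 1)
      = (2 * (n : ℚ) + 1) * (12 * (n : ℚ) ^ 2 + 12 * (n : ℚ) + 4) * u n
        - 16 * (n : ℚ) ^ 3 * u (n - 1)

def SatisfiesContinuantRec (U : ℕ → ℚ) : Prop :=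
  ∀ n : ℕ, 2 ≤ n →
    U n = (2 * (n : ℚ) + 1) * (3 * (n : ℚ) ^ 2 + 3 * (n : ℚ) + 1) * U (n - 1)
      - (n : ℚ) ^ 6 * U (n - 2)

theorem satisfiesLevelEightRec_s : SatisfiesLevelEightRec (fun n => (s n : ℚ)) := by
  intro n hn
  obtain ⟨m, rfl⟩ := Nat.exists_eq_add_of_le' hn
  simp only [Nat.add_sub_cancel, add_assoc, Nat.reduceAdd]
  push_cast
  linear_combination cast_s_rec m

theorem eq_of_second_order_rec {R : Type*} [Ring R] (a b : ℕ → R) {U V : ℕ → R}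
    (hU : ∀ n, 2 ≤ n → U n = a n * U (n - 1) - b n * U (n - 2))
    (hV : ∀ n, 2 ≤ n → V n = a n * V (n - 1) - b n * V (n - 2))
    (h0 : U 0 = V 0) (h1 : U 1 = V 1) : U = V := by
  funext n
  induction n using Nat.strong_induction_on with
  | _ n ih =>
    match n with
    | 0 => exact h0
    | 1 => exact h1
    | n + 2 =>
      rw [hU _ le_add_self, hV _ le_add_self, ih (n + 2 - 1) (by omega), ih (n + 2 - 2) (by omega)]

theorem SatisfiesLevelEightRec.satisfiesContinuantRec {u : ℕ → ℚ}
    (hu : SatisfiesLevelEightRec u) (j : ℕ) :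
    SatisfiesContinuantRec fun n => ((n + 1).factorial : ℚ) ^ 3 * u (n + 1) / 4 ^ (n + j) := by
  intro n hn
  obtain ⟨m, rfl⟩ := Nat.exists_eq_add_of_le' hn
  have hrec := hu (m + 2) le_add_self
  simp only [show m + 2 - 1 = m + 1 by omega, Nat.add_sub_cancel] at hrec ⊢
  rw [Nat.factorial_succ (m + 2), Nat.factorial_succ (m + 1),
    show m + 2 + j = m + j + 2 by omega, show m + 1 + j = m + j + 1 by omega]
  push_cast at hrec ⊢
  linear_combination ((m + 2 : ℚ) ^ 3 * ((m + 1).factorial : ℚ) ^ 3 / (16 * 4 ^ (m + j))) * hrec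

theorem continuants_closed_form (P Q B : ℕ → ℚ)
    (hP0 : P 0 = 1) (hP1 : P 1 = 20) (hQ0 : Q 0 = 1) (hQ1 : Q 1 = 21)
    (hPrec : ∀ n : ℕ, 2 ≤ n →
      P n = (2 * (n : ℚ) + 1) * (3 * (n : ℚ) ^ 2 + 3 * (n : ℚ) + 1) * P (n - 1)
              - (n : ℚ) ^ 6 * P (n - 2))
    (hQrec : ∀ n : ℕ, 2 ≤ n →
      Q n = (2 * (n : ℚ) + 1) * (3 * (n : ℚ) ^ 2 + 3 * (n : ℚ) + 1) * Q (n - 1)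
              - (n : ℚ) ^ 6 * Q (n - 2))
    (hB0 : B 0 = 0) (hB1 : B 1 = 1)
    (hBrec : ∀ n : ℕ, 1 ≤ n →
      ((n : ℚ) + 1) ^ 3 * B (n + 1)
        = (2 * (n : ℚ) + 1) * (12 * (n : ℚ) ^ 2 + 12 * (n : ℚ) + 4) * B n
            - 16 * (n : ℚ) ^ 3 * B (n - 1)) :
    ∀ n : ℕ,
      P n = ((Nat.factorial (n + 1) : ℚ)) ^ 3 * (s (n + 1) : ℚ) / 4 ^ (n + 1) ∧
      Q n = ((Nat.factorial (n + 1) : ℚ)) ^ 3 * B (n + 1) / 4 ^ n := by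
  have hs1 : s 1 = 4 := by decide
  have hs2 : s 2 = 40 := by decide
  have hB2 : B 2 = 21 / 2 := by
    have := hBrec 1 le_rfl
    norm_num [hB0, hB1] at this
    linarith
  have hP := eq_of_second_order_rec _ _ hPrec (satisfiesLevelEightRec_s.satisfiesContinuantRec 1)
    (by norm_num [hP0, hs1]) (by norm_num [hP1, hs2, Nat.factorial])
  have hQ :=
    eq_of_second_order_rec _ _ hQrec (SatisfiesLevelEightRec.satisfiesContinuantRec hBrec 0)
    (by norm_num [hQ0, hB1]) (by norm_num [hQ1, hB2, Nat.factorial])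
  exact fun n => ⟨congrFun hP n, by simpa using congrFun hQ n⟩
end

section
/- The sequence s_n := ∑_{k=0}^n (n choose k)² (2k choose n)² satisfies s_0 = 1, s_1 = 4, and the three-term cubic recurrence (n+1)³ s_{n+1} = (2n+1)(12n²+12n+4) s_n − 16 n³ s_{n−1} for every n ≥ 1. -/
open Finset

section CastChoose

variable {R : Type*} [CommRing R]

theorem Nat.cast_choose_mul_succ_eq (n k : ℕ) :
    (n.choose k : R) * (n + 1) = (n + 1).choose k * ((n : R) + 1 - k) := by
  rcases le_or_gt k (n + 1) with h | h
  · have := congrArg (Nat.cast : ℕ → R) (Nat.choose_mul_succ_eq n k)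
    push_cast [Nat.cast_sub h] at this
    exact this
  · simp [Nat.choose_eq_zero_of_lt h, Nat.choose_eq_zero_of_lt (show n < k by omega)]

theorem Nat.cast_choose_succ_right_eq (n k : ℕ) :
    (n.choose (k + 1) : R) * (k + 1) = n.choose k * ((n : R) - k) := by
  rcases le_or_gt k n with h | h
  · have := congrArg (Nat.cast : ℕ → R) (Nat.choose_succ_right_eq n k)
    push_cast [Nat.cast_sub h] at this
    exact this
  · simp [Nat.choose_eq_zero_of_lt h, Nat.choose_eq_zero_of_lt (show n < k + 1 by omega)]

end CastChoose

theorem Nat.cast_add_one_mul_choose_eq {R : Type*} [Semiring R] (n k : ℕ) :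
    ((n : R) + 1) * n.choose k = (n + 1).choose (k + 1) * ((k : R) + 1) := by
  have := congrArg (Nat.cast : ℕ → R) (Nat.add_one_mul_choose_eq n k)
  push_cast at this
  exact this

def sCertificatePoly (x y : ℚ) : ℚ :=
  (7 * x ^ 5 + 17 * x ^ 4 + 13 * x ^ 3 + 3 * x ^ 2)
  + y * (-44 * x ^ 4 - 92 * x ^ 3 - 60 * x ^ 2 - 12 * x)
  + y ^ 2 * (100 * x ^ 3 + 168 * x ^ 2 + 84 * x + 12)
  + y ^ 3 * (-96 * x ^ 2 - 112 * x - 32)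
  + y ^ 4 * (32 * x + 16)

theorem sCertificatePoly_add_one_add_one (a b : ℚ) :
    sCertificatePoly (a + 1) (b + 1) = (2 * b + 1 - a) ^ 2 *
      (7 * a ^ 3 - 16 * a ^ 2 * b + 22 * a ^ 2 + 8 * a * b ^ 2 - 40 * a * b + 20 * a
        + 12 * b ^ 2 - 24 * b + 4) := by
  unfold sCertificatePoly
  ring

/-- The certificate for the recurrence at index `n + 1`, relating `sTerm n`, `sTerm (n + 1)` and
`sTerm (n + 2)`. -/
def sCertificate (n k : ℕ) : ℚ :=
  sCertificatePoly (n + 1) k * (((n + 2).choose k : ℚ) * (2 * k).choose (n + 1) / (n + 2)) ^ 2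

theorem sCertificate_zero (n : ℕ) : sCertificate n 0 = 0 := by
  simp [sCertificate]

theorem sCertificate_eq_zero_of_lt {n k : ℕ} (h : n + 2 < k) : sCertificate n k = 0 := by
  simp [sCertificate, Nat.choose_eq_zero_of_lt h]

theorem sTerm_recurrence_telescopes (n k : ℕ) :
    ((n : ℚ) + 2) ^ 3 * sTerm (n + 2) k
      - (2 * (n : ℚ) + 3) * (12 * ((n : ℚ) + 1) ^ 2 + 12 * ((n : ℚ) + 1) + 4) * sTerm (n + 1) k
      + 16 * ((n : ℚ) + 1) ^ 3 * sTerm n k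
      = sCertificate n (k + 1) - sCertificate n k := by
  have hn1 : (n : ℚ) + 1 ≠ 0 := by positivity
  have hn2 : (n : ℚ) + 2 ≠ 0 := by positivity
  have hk1 : (k : ℚ) + 1 ≠ 0 := by positivity
  have h_n1_k : ((n + 1).choose k : ℚ) = ((n : ℚ) + 2 - k) / (n + 2) * (n + 2).choose k := by
    have := Nat.cast_choose_mul_succ_eq (R := ℚ) (n + 1) k
    push_cast at this
    field_simp
    linear_combination this
  have h_n_k : (n.choose k : ℚ) = ((n : ℚ) + 1 - k) / (n + 1) * (n + 1).choose k := by
    have := Nat.cast_choose_mul_succ_eq (R := ℚ) n k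
    field_simp
    linear_combination this
  have h_n2_k1 : ((n + 2).choose (k + 1) : ℚ) = ((n : ℚ) + 2 - k) / (k + 1) * (n + 2).choose k := by
    have := Nat.cast_choose_succ_right_eq (R := ℚ) (n + 2) k
    push_cast at this
    field_simp
    linear_combination this
  have h_2k_n1 : ((2 * k).choose (n + 1) : ℚ) = (2 * (k : ℚ) - n) / (n + 1) * (2 * k).choose n := by
    have := Nat.cast_choose_succ_right_eq (R := ℚ) (2 * k) n
    push_cast at this
    field_simp
    linear_combination this
  have h_2k_n2 : ((2 * k).choose (n + 2) : ℚ)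
      = (2 * (k : ℚ) - n - 1) / (n + 2) * (2 * k).choose (n + 1) := by
    have := Nat.cast_choose_succ_right_eq (R := ℚ) (2 * k) (n + 1)
    push_cast at this
    field_simp
    linear_combination this
  have h_2k2_n1 : (2 * (k : ℚ) + 1 - n) * (2 * (k + 1)).choose (n + 1)
      = (2 * (k : ℚ) + 2) * (2 * k + 1) / (n + 1) * (2 * k).choose n := by
    have h_succ := Nat.cast_add_one_mul_choose_eq (R := ℚ) (2 * k + 1) n
    have h_up := Nat.cast_choose_mul_succ_eq (R := ℚ) (2 * k) n
    rw [show 2 * k + 1 + 1 = 2 * (k + 1) by ring] at h_succ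
    push_cast at h_succ h_up
    field_simp
    linear_combination -(2 * (k : ℚ) + 1 - n) * h_succ - (2 * (k : ℚ) + 2) * h_up
  unfold sCertificate sTerm
  push_cast
  rw [sCertificatePoly_add_one_add_one, h_n_k, h_n1_k, h_n2_k1, h_2k_n2, h_2k_n1]
  unfold sCertificatePoly
  -- `sCertificate n (k + 1)` contains `((2k+1-n) C(2k+2,n+1))²`; replace it by the square of the
  -- right side of `h_2k2_n1`.
  linear_combination (norm := skip)
    -(7 * (n : ℚ) ^ 3 - 16 * (n : ℚ) ^ 2 * k + 22 * (n : ℚ) ^ 2 + 8 * (n : ℚ) * k ^ 2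
        - 40 * (n : ℚ) * k + 20 * (n : ℚ) + 12 * (k : ℚ) ^ 2 - 24 * (k : ℚ) + 4)
      * (((n : ℚ) + 2 - k) / (k + 1) * (n + 2).choose k / (n + 2)) ^ 2
      * ((2 * (k : ℚ) + 1 - n) * (2 * (k + 1)).choose (n + 1)
          + (2 * (k : ℚ) + 2) * (2 * k + 1) / (n + 1) * (2 * k).choose n) * h_2k2_n1
  field_simp
  ring

theorem s_add_two_recurrence (n : ℕ) :
    ((n : ℚ) + 2) ^ 3 * s (n + 2)
      - (2 * (n : ℚ) + 3) * (12 * ((n : ℚ) + 1) ^ 2 + 12 * ((n : ℚ) + 1) + 4) * s (n + 1)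
      + 16 * ((n : ℚ) + 1) ^ 3 * s n = 0 := by
  rw [cast_s_eq_sum_sTerm (N := n + 3) le_rfl, cast_s_eq_sum_sTerm (N := n + 3) (by omega),
    cast_s_eq_sum_sTerm (N := n + 3) (by omega)]
  simp only [mul_sum, ← sum_sub_distrib, ← sum_add_distrib, sTerm_recurrence_telescopes,
    sum_range_sub, sCertificate_eq_zero_of_lt (show n + 2 < n + 3 by omega), sCertificate_zero,
    sub_zero]

theorem s_recurrence :
    s 0 = 1 ∧ s 1 = 4 ∧
    ∀ n : ℕ, 1 ≤ n →
      ((n : ℚ) + 1) ^ 3 * (s (n + 1) : ℚ)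
        = (2 * (n : ℚ) + 1) * (12 * (n : ℚ) ^ 2 + 12 * (n : ℚ) + 4) * (s n : ℚ)
            - 16 * (n : ℚ) ^ 3 * (s (n - 1) : ℚ) := by
  refine ⟨rfl, rfl, fun n hn => ?_⟩
  obtain ⟨m, rfl⟩ := Nat.exists_eq_add_of_le' hn
  rw [Nat.add_sub_cancel]
  push_cast
  linear_combination s_add_two_recurrence m
end

section
/- For every complex s with 0 < Re(s) < 1 one has the functional equation Γ(s)·(π/√2)^{−s}·ζ(s+3)·ζ(s)·(1−2^{−s−3})(1−2^{−s−1})(1−2^{1−s}) = Γ(−s−2)·(π/√2)^{s+2}·ζ(1−s)·ζ(−2−s)·(1−2^{s−1})(1−2^{s+1})(1−2^{s+3}), where ζ is the (analytically continued) Riemann zeta function and Γ is the Gamma function. -/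
/-!
Apply the asymmetric functional equation `ζ(1 - w) = 2 (2π)^(-w) Γ(w) cos(πw/2) ζ(w)` at `w = s`
and at `w = s + 3`. Since `cos(π(s + 3)/2) = sin(πs/2)`, the two trigonometric factors multiply
to `sin(πs)/2`, which cancels against the reflection formula `Γ(-s - 2) Γ(s + 3) = -π / sin(πs)`.
Each Euler factor turns around as `1 - 2^(-w) = -2^(-w) (1 - 2^w)`, and the leftover powers of
`2` and `π` balance because `(π/√2)² / (2π)² = 1/8`.
-/

open scoped Real

open Complex

lemma one_sub_cpow_neg {x : ℂ} (hx : x ≠ 0) (z : ℂ) :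
    1 - x ^ (-z) = -x ^ (-z) * (1 - x ^ z) := by
  have hxz : x ^ z ≠ 0 := cpow_ne_zero_iff.mpr (Or.inl hx)
  rw [cpow_neg]
  field_simp
  ring

lemma one_sub_two_cpow_neg_prod (s : ℂ) :
    (1 - (2 : ℂ) ^ (-s - 3)) * (1 - (2 : ℂ) ^ (-s - 1)) * (1 - (2 : ℂ) ^ (1 - s)) =
      -((2 : ℂ) ^ (-s - 3) * (2 : ℂ) ^ (-s - 1) * (2 : ℂ) ^ (1 - s)) *
        ((1 - (2 : ℂ) ^ (s - 1)) * (1 - (2 : ℂ) ^ (s + 1)) * (1 - (2 : ℂ) ^ (s + 3))) := by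
  rw [show -s - 3 = -(s + 3) by ring, show -s - 1 = -(s + 1) by ring,
    show 1 - s = -(s - 1) by ring]
  simp only [one_sub_cpow_neg two_ne_zero]
  ring

-- Both sides are `exp(-s log π - (5s/2 + 3) log 2)`.
lemma pi_div_sqrt_two_cpow_mul_two_cpow (s : ℂ) :
    ((π : ℂ) / (Real.sqrt 2 : ℂ)) ^ (-s) *
        ((2 : ℂ) ^ (-s - 3) * (2 : ℂ) ^ (-s - 1) * (2 : ℂ) ^ (1 - s)) =
      2 * π * (2 * π) ^ (-s) * (2 * π) ^ (-(s + 3)) * ((π : ℂ) / (Real.sqrt 2 : ℂ)) ^ (s + 2) := by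
  have h2π : (2 * π : ℂ) ≠ 0 := mul_ne_zero two_ne_zero (ofReal_ne_zero.mpr Real.pi_ne_zero)
  have hA : (π : ℂ) / (Real.sqrt 2 : ℂ) ≠ 0 := by simp [Real.pi_ne_zero]
  have hlog2 : log 2 = Real.log 2 := by
    rw [← ofReal_ofNat, ofReal_log zero_le_two]
  have hlog2π : log (2 * π) = Real.log 2 + Real.log π := by
    rw [← ofReal_ofNat, ← ofReal_mul, ← ofReal_log (by positivity),
      Real.log_mul two_ne_zero Real.pi_ne_zero, ofReal_add]
  have hlogA : log ((π : ℂ) / (Real.sqrt 2 : ℂ)) = Real.log π - Real.log 2 / 2 := by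
    rw [← ofReal_div, ← ofReal_log (by positivity), Real.log_div Real.pi_ne_zero (by positivity),
      Real.log_sqrt zero_le_two]
    push_cast; ring
  nth_rewrite 1 [← exp_log h2π]
  simp only [cpow_def_of_ne_zero h2π, cpow_def_of_ne_zero hA, cpow_def_of_ne_zero two_ne_zero,
    ← exp_add]
  rw [hlog2, hlog2π, hlogA]
  ring_nf

lemma Gamma_neg_sub_two_mul_Gamma_add_three (s : ℂ) :
    Gamma (-s - 2) * Gamma (s + 3) = -π / sin (π * s) := by
  have hsin : sin (π * (s + 3)) = -sin (π * s) := by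
    rw [show π * (s + 3) = π * s + π + π + π by ring]
    simp only [sin_add_pi, neg_neg]
  rw [mul_comm, show -s - 2 = 1 - (s + 3) by ring, Gamma_mul_Gamma_one_sub, hsin, div_neg,
    neg_div]

lemma riemannZeta_one_sub_mul_riemannZeta_neg_two_sub {s : ℂ} (hs : s ∈ integerComplement) :
    riemannZeta (1 - s) * riemannZeta (-2 - s) =
      2 * (2 * π) ^ (-s) * (2 * π) ^ (-(s + 3)) * Gamma s * Gamma (s + 3) * sin (π * s) *
        (riemannZeta s * riemannZeta (s + 3)) := by
  have hζ₁ := riemannZeta_one_sub (s := s) (fun n h => hs ⟨-n, by rw [h]; push_cast; rfl⟩)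
    (fun h => hs ⟨1, by rw [h]; push_cast; rfl⟩)
  have hζ₂ := riemannZeta_one_sub (s := s + 3)
    (fun n h => hs ⟨-n - 3, by push_cast; linear_combination -h⟩)
    (fun h => hs ⟨-2, by push_cast; linear_combination -h⟩)
  have hcos : cos (π * (s + 3) / 2) = sin (π * s / 2) := by
    rw [show π * (s + 3) / 2 = π * s / 2 + π + π / 2 by ring, cos_add_pi_div_two, sin_add_pi,
      neg_neg]
  have hsin : sin (π * s) = 2 * sin (π * s / 2) * cos (π * s / 2) := by
    rw [← sin_two_mul]; ring_nf
  rw [show 1 - (s + 3) = -2 - s by ring, hcos] at hζ₂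
  rw [hζ₁, hζ₂, hsin]
  ring

lemma Gamma_neg_sub_two_mul_riemannZeta_one_sub_mul_riemannZeta_neg_two_sub {s : ℂ}
    (hs : s ∈ integerComplement) :
    Gamma (-s - 2) * (riemannZeta (1 - s) * riemannZeta (-2 - s)) =
      -(2 * π) * (2 * π) ^ (-s) * (2 * π) ^ (-(s + 3)) * Gamma s *
        (riemannZeta s * riemannZeta (s + 3)) := by
  have hΓ := Gamma_neg_sub_two_mul_Gamma_add_three s
  rw [eq_div_iff (sin_pi_mul_ne_zero hs)] at hΓ
  rw [riemannZeta_one_sub_mul_riemannZeta_neg_two_sub hs]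
  linear_combination (2 * (2 * π) ^ (-s) * (2 * π) ^ (-(s + 3)) * Gamma s *
    (riemannZeta s * riemannZeta (s + 3))) * hΓ

lemma mem_integerComplement_of_re_pos_of_re_lt_one {s : ℂ} (h0 : 0 < s.re) (h1 : s.re < 1) :
    s ∈ integerComplement := by
  rintro ⟨n, rfl⟩
  simp only [intCast_re] at h0 h1
  norm_cast at h0 h1
  omega

theorem functional_equation_g8 (s : ℂ) (h0 : 0 < s.re) (h1 : s.re < 1) :
    Complex.Gamma s * ((π : ℂ) / (Real.sqrt 2 : ℂ)) ^ (-s) *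
        (riemannZeta (s + 3) * riemannZeta s) *
        ((1 - (2 : ℂ) ^ (-s - 3)) * (1 - (2 : ℂ) ^ (-s - 1)) * (1 - (2 : ℂ) ^ (1 - s)))
      = Complex.Gamma (-s - 2) * ((π : ℂ) / (Real.sqrt 2 : ℂ)) ^ (s + 2) *
        (riemannZeta (1 - s) * riemannZeta (-2 - s)) *
        ((1 - (2 : ℂ) ^ (s - 1)) * (1 - (2 : ℂ) ^ (s + 1)) * (1 - (2 : ℂ) ^ (s + 3))) := by
  have hζ := Gamma_neg_sub_two_mul_riemannZeta_one_sub_mul_riemannZeta_neg_two_sub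
    (mem_integerComplement_of_re_pos_of_re_lt_one h0 h1)
  rw [one_sub_two_cpow_neg_prod]
  set P := (1 - (2 : ℂ) ^ (s - 1)) * (1 - (2 : ℂ) ^ (s + 1)) * (1 - (2 : ℂ) ^ (s + 3))
  linear_combination (-Gamma s * (riemannZeta s * riemannZeta (s + 3)) * P) *
      pi_div_sqrt_two_cpow_mul_two_cpow s - (((π : ℂ) / (Real.sqrt 2 : ℂ)) ^ (s + 2) * P) * hζ
end

section
/- The function s ↦ ζ(s)·ζ(s−3)·(1−2^{−s})(1−2^{2−s})(1−2^{4−s}) (defined for complex s ≠ 1 using the analytically continued Riemann zeta function) tends to −(7/(8π²))·ζ(3) as s → 1 with s ≠ 1, where ζ(3) = ∑_{n≥1} 1/n³. -/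
/-!
By the functional equation, `ζ(s - 3) = ζ(1 - (4 - s))` equals `2 (2π)^(s-4) Γ(4 - s) ζ(4 - s)`
times `cos(π(4 - s)/2) = cos(πs/2)`. That cosine has a simple zero at `s = 1` with slope `-π/2`,
which cancels the simple pole of `ζ(s)` (residue `1`); so `ζ(s) ζ(s - 3) → -(π/2) · 2 (2π)⁻³ Γ(3) ζ(3)
= -ζ(3)/(4π²)`, while the Euler factors are continuous with value `(1/2)(-1)(-7) = 7/2` at `s = 1`.
-/

open scoped Real

/-- ζ(3) = ∑_{n≥1} 1/n³. -/
noncomputable def zeta3 : ℝ := ∑' n : ℕ, 1 / ((n : ℝ) + 1) ^ 3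

open Filter Complex Topology

lemma riemannZeta_three : riemannZeta 3 = zeta3 := by
  rw [zeta_eq_tsum_one_div_nat_add_one_cpow (by norm_num), zeta3, ofReal_tsum]
  congr 1 with n
  rw [show (3 : ℂ) = (3 : ℕ) by norm_num, cpow_natCast]
  push_cast
  rfl

lemma riemannZeta_sub_three {s : ℂ} (hs : ∀ n : ℕ, s ≠ n + 3) :
    riemannZeta (s - 3) =
      2 * (2 * π) ^ (s - 4) * Gamma (4 - s) * cos (π * s / 2) * riemannZeta (4 - s) := by
  have hneg : ∀ n : ℕ, 4 - s ≠ -n := fun n h => hs (n + 1) (by push_cast; linear_combination -h)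
  have hone : 4 - s ≠ 1 := fun h => hs 0 (by push_cast; linear_combination -h)
  have hcos : cos (π * (4 - s) / 2) = cos (π * s / 2) := by
    rw [show (π : ℂ) * (4 - s) / 2 = -(π * s / 2) + (1 : ℕ) * (2 * π) by push_cast; ring,
      cos_add_nat_mul_two_pi, cos_neg]
  rw [← hcos, show s - 4 = -(4 - s) by ring, ← riemannZeta_one_sub hneg hone]
  ring_nf

lemma tendsto_cos_pi_mul_div_two_div_sub_one :
    Tendsto (fun s : ℂ => cos (π * s / 2) / (s - 1)) (𝓝[≠] 1) (𝓝 (-(π / 2))) := by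
  have hderiv : HasDerivAt (fun s : ℂ => cos (π * s / 2)) (-(π / 2)) 1 := by
    simpa using ((hasDerivAt_id (1 : ℂ)).const_mul (π : ℂ)).div_const 2 |>.ccos
  refine (hasDerivAt_iff_tendsto_slope.mp hderiv).congr fun s => ?_
  simp [slope_def_field, cos_pi_div_two]

lemma continuousAt_functionalEquation_factor :
    ContinuousAt (fun s : ℂ => 2 * (2 * π) ^ (s - 4) * Gamma (4 - s) * riemannZeta (4 - s)) 1 := by
  have hπ : (2 * π : ℂ) ≠ 0 := by simp [Real.pi_ne_zero]
  have hGamma : ContinuousAt Gamma (4 - 1) :=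
    (differentiableAt_Gamma _ fun m h => by
      have := congrArg re h; norm_num at this; linarith [m.cast_nonneg (α := ℝ)]).continuousAt
  have hzeta : ContinuousAt riemannZeta (4 - 1) :=
    (differentiableAt_riemannZeta (by norm_num)).continuousAt
  exact ((continuousAt_const.mul (continuousAt_const_cpow hπ |>.comp (by fun_prop))).mul
    (hGamma.comp (by fun_prop))).mul (hzeta.comp (by fun_prop))

lemma tendsto_riemannZeta_mul_riemannZeta_sub_three :
    Tendsto (fun s => riemannZeta s * riemannZeta (s - 3)) (𝓝[≠] 1)
      (𝓝 (-(riemannZeta 3 / (4 * π ^ 2)))) := by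
  have hlim := (riemannZeta_residue_one.mul tendsto_cos_pi_mul_div_two_div_sub_one).mul
    (continuousAt_functionalEquation_factor.tendsto.mono_left nhdsWithin_le_nhds)
  have hval : 1 * -(π / 2) * (2 * (2 * π) ^ ((1 : ℂ) - 4) * Gamma (4 - 1) * riemannZeta (4 - 1))
      = -(riemannZeta 3 / (4 * π ^ 2)) := by
    rw [show (1 : ℂ) - 4 = -(3 : ℕ) by norm_num, cpow_neg, cpow_natCast,
      show (4 : ℂ) - 1 = 3 by norm_num, Gamma_ofNat_eq_factorial]
    norm_num [Nat.factorial]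
    field_simp
    ring
  rw [← hval]
  refine hlim.congr' ?_
  filter_upwards [self_mem_nhdsWithin, nhdsWithin_le_nhds
    (continuous_re.continuousAt.eventually_lt continuousAt_const (by norm_num : (1 : ℂ).re < 2))]
    with s hs1 hs2
  have hs : ∀ n : ℕ, s ≠ n + 3 := fun n h => by
    have := congrArg re h; simp at this; linarith [n.cast_nonneg (α := ℝ)]
  rw [riemannZeta_sub_three hs]
  field_simp [sub_ne_zero.mpr hs1]

lemma tendsto_euler_factors_two :
    Tendsto (fun s : ℂ => (1 - (2 : ℂ) ^ (-s)) * (1 - (2 : ℂ) ^ (2 - s)) * (1 - (2 : ℂ) ^ (4 - s)))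
      (𝓝 1) (𝓝 (7 / 2)) := by
  have hcont : Continuous fun s : ℂ =>
      (1 - (2 : ℂ) ^ (-s)) * (1 - (2 : ℂ) ^ (2 - s)) * (1 - (2 : ℂ) ^ (4 - s)) := by
    fun_prop (disch := norm_num)
  convert hcont.tendsto 1 using 2
  rw [show -(1 : ℂ) = ((-1 : ℤ) : ℂ) by norm_num, show (2 : ℂ) - 1 = ((1 : ℤ) : ℂ) by norm_num,
    show (4 : ℂ) - 1 = ((3 : ℤ) : ℂ) by norm_num, cpow_intCast, cpow_intCast, cpow_intCast]
  norm_num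

theorem L_g8_at_one :
    Filter.Tendsto
      (fun s : ℂ => riemannZeta s * riemannZeta (s - 3) *
        ((1 - (2 : ℂ) ^ (-s)) * (1 - (2 : ℂ) ^ (2 - s)) * (1 - (2 : ℂ) ^ (4 - s))))
      (nhdsWithin 1 {(1 : ℂ)}ᶜ)
      (nhds (-(7 / (8 * (π : ℂ) ^ 2)) * (zeta3 : ℂ))) := by
  convert tendsto_riemannZeta_mul_riemannZeta_sub_three.mul
    (tendsto_euler_factors_two.mono_left nhdsWithin_le_nhds) using 2
  rw [riemannZeta_three]
  ring
end
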